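/- For every α ∈ [1,2] and all x, y ∈ [0,1]: f_α((x+y)/2) ≤ (f_α(x) + f_α(y))/2 + |x - y|^α. -/

import Mathlib

/-!
Write `m = (x + y)/2`, `h = |y - x|` and consider the corrected defect
`G(x, y) = f_α(m) - (f_α(x) + f_α(y))/2 - h^α + 2^α · max(0, (h - φ(m))/2)`.
The correction is positive exactly when `(x, y)` contains an integer, i.e. a kink of `φ`
where its own midpoint defect is negative. From `f_α(x) = φ(x) + 2^{-α} f_α(2x)`, the explicit
midpoint defect of `φ`, 1-periodicity and `f_α(z - 1/2) = f_α(z) + 1 - 2φ(z)`, one gets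
`2^α G(x, y) ≤ G(x', y')` with `(x', y') = (2x, 2y)` if `h ≤ 1/2` and `(2x, 2y - 1)`
otherwise, so again `|y' - x'| ≤ 1`. In the second case the comparison of `h^α` with
`(2h - 1)^α` uses the concavity of `(1 + s)^α - s^α`, valid for `1 ≤ α ≤ 2`. As `G` is bounded,
its supremum `M` satisfies `2^α M ≤ M`, hence `G ≤ 0`.
-/

/-- The tent map `φ(x) = 2 inf{|x-n| : n ∈ ℤ}`. -/
noncomputable def tent (x : ℝ) : ℝ := 2 * ⨅ n : ℤ, |x - (n:ℝ)|

/-- `f_α(x) = ∑_{j=0}^∞ 2^{-αj} φ(2^j x)`. -/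
noncomputable def takagi (α x : ℝ) : ℝ :=
  ∑' j : ℕ, (1 / (2:ℝ) ^ (α * (j:ℝ))) * tent ((2:ℝ) ^ (j:ℕ) * x)

lemma nonpos_of_forall_exists_mul_le {ι : Type*} {g : ι → ℝ} {c : ℝ} (hc : 1 < c)
    (hg : BddAbove (Set.range g)) (h : ∀ i, ∃ j, c * g i ≤ g j) (i : ι) : g i ≤ 0 := by
  have : Nonempty ι := ⟨i⟩
  have hsup : c * ⨆ j, g j ≤ ⨆ j, g j := by
    rw [Real.mul_iSup_of_nonneg (by linarith)]
    exact ciSup_le fun k => (h k).elim fun j hj => hj.trans (le_ciSup hg j)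
  have := le_ciSup hg i
  nlinarith

section PowTwo

variable {α : ℝ}

lemma two_rpow_neg_lt_one (hα : 0 < α) : (2 : ℝ) ^ (-α) < 1 :=
  Real.rpow_lt_one_of_one_lt_of_neg one_lt_two (neg_neg_of_pos hα)

lemma two_rpow_mul_two_rpow_neg (α : ℝ) : (2 : ℝ) ^ α * 2 ^ (-α) = 1 := by
  rw [Real.rpow_neg zero_le_two, mul_inv_cancel₀ (by positivity)]

lemma two_le_two_rpow (hα : 1 ≤ α) : (2 : ℝ) ≤ 2 ^ α :=
  Real.self_le_rpow_of_one_le one_le_two hα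

lemma two_rpow_le_four (hα : α ≤ 2) : (2 : ℝ) ^ α ≤ 4 := by
  calc (2 : ℝ) ^ α ≤ 2 ^ (2 : ℝ) := Real.rpow_le_rpow_of_exponent_le one_le_two hα
    _ = 4 := by norm_num

end PowTwo

lemma tent_eq_of_abs_sub_le_half {x : ℝ} {k : ℤ} (hk : |x - k| ≤ 1 / 2) :
    tent x = 2 * |x - k| := by
  unfold tent
  congr 1
  refine le_antisymm (ciInf_le ⟨0, ?_⟩ k) (le_ciInf fun n => ?_)
  · rintro _ ⟨n, rfl⟩
    exact abs_nonneg _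
  obtain rfl | hn := eq_or_ne n k
  · exact le_rfl
  have h1 : (1 : ℝ) ≤ |(n : ℝ) - k| := by exact_mod_cast Int.one_le_abs (sub_ne_zero.2 hn)
  have h2 := abs_sub_le (n : ℝ) x k
  rw [abs_sub_comm (n : ℝ) x] at h2
  linarith

lemma tent_eq_two_mul_abs_sub_round (x : ℝ) : tent x = 2 * |x - round x| :=
  tent_eq_of_abs_sub_le_half (abs_sub_round x)

lemma tent_nonneg (x : ℝ) : 0 ≤ tent x := by
  rw [tent_eq_two_mul_abs_sub_round]
  positivity

lemma tent_le_one (x : ℝ) : tent x ≤ 1 := by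
  rw [tent_eq_two_mul_abs_sub_round]
  linarith [abs_sub_round x]

lemma tent_add_intCast (x : ℝ) (n : ℤ) : tent (x + n) = tent x := by
  have e : x + n - ((round x + n : ℤ) : ℝ) = x - round x := by push_cast; ring
  rw [tent_eq_of_abs_sub_le_half (by rw [e]; exact abs_sub_round x), e,
    tent_eq_two_mul_abs_sub_round]

lemma tent_neg (x : ℝ) : tent (-x) = tent x := by
  have e : -x - ((-round x : ℤ) : ℝ) = -(x - round x) := by push_cast; ring
  rw [tent_eq_of_abs_sub_le_half (by rw [e, abs_neg]; exact abs_sub_round x), e, abs_neg,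
    tent_eq_two_mul_abs_sub_round]

lemma tent_sub_half (x : ℝ) : tent (x - 1 / 2) = 1 - tent x := by
  have hu := abs_le.1 (abs_sub_round x)
  rw [tent_eq_two_mul_abs_sub_round x]
  rcases le_or_gt 0 (x - round x) with h | h
  · rw [tent_eq_of_abs_sub_le_half (k := round x) (by rw [abs_le]; constructor <;> linarith),
      abs_of_nonpos (by linarith), abs_of_nonneg h]
    ring
  · rw [tent_eq_of_abs_sub_le_half (k := round x - 1)
      (by push_cast; rw [abs_le]; constructor <;> linarith),
      abs_of_nonneg (by push_cast; linarith), abs_of_neg h]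
    push_cast
    ring

lemma tent_two_mul (x : ℝ) : tent (2 * x) = 2 * min (tent x) (1 - tent x) := by
  have hu := abs_le.1 (abs_sub_round x)
  rw [tent_eq_two_mul_abs_sub_round x]
  rcases le_or_gt (x - round x) (-1 / 4) with h | h
  · rw [tent_eq_of_abs_sub_le_half (k := 2 * round x - 1)
      (by push_cast; rw [abs_le]; constructor <;> linarith),
      abs_of_nonneg (by push_cast; linarith), abs_of_neg (by linarith),
      min_eq_right (by linarith)]
    push_cast
    ring
  rcases le_or_gt (x - round x) (1 / 4) with h' | h'
  · rw [tent_eq_of_abs_sub_le_half (k := 2 * round x)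
      (by push_cast; rw [abs_le]; constructor <;> linarith)]
    push_cast
    rw [show 2 * x - 2 * round x = 2 * (x - round x) by ring, abs_mul, abs_two,
      min_eq_left (by cases abs_cases (x - round x) <;> linarith)]
  · rw [tent_eq_of_abs_sub_le_half (k := 2 * round x + 1)
      (by push_cast; rw [abs_le]; constructor <;> linarith),
      abs_of_nonpos (by push_cast; linarith), abs_of_pos (by linarith),
      min_eq_right (by linarith)]
    push_cast
    ring

noncomputable def midDefect (f : ℝ → ℝ) (x y : ℝ) : ℝ := f ((x + y) / 2) - (f x + f y) / 2

lemma midDefect_comm (f : ℝ → ℝ) (x y : ℝ) : midDefect f x y = midDefect f y x := by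
  simp only [midDefect, add_comm]

lemma midDefect_tent_of_mem_Icc {x y : ℝ} {k : ℤ} (hxy : x ≤ y) (h1 : y - x ≤ 1)
    (hk : (x + y) / 2 - k ∈ Set.Icc (0 : ℝ) (1 / 2)) :
    midDefect tent x y =
      max 0 (y - x - 1 + tent ((x + y) / 2)) - max 0 (y - x - tent ((x + y) / 2)) := by
  obtain ⟨hk0, hk1⟩ := hk
  have hm : tent ((x + y) / 2) = 2 * ((x + y) / 2 - k) := by
    rw [tent_eq_of_abs_sub_le_half (abs_le.2 ⟨by linarith, hk1⟩), abs_of_nonneg (by linarith)]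
  have hx : tent x = 2 * |x - k| :=
    tent_eq_of_abs_sub_le_half (abs_le.2 ⟨by linarith, by linarith⟩)
  simp only [midDefect, hm, hx]
  rcases le_or_gt (y - k) (1 / 2) with h | h
  · rw [tent_eq_of_abs_sub_le_half (abs_le.2 ⟨by linarith, h⟩)]
    simp only [abs_eq_max_neg, max_def]
    split_ifs <;> linarith
  · rw [tent_eq_of_abs_sub_le_half (k := k + 1)
      (by push_cast; rw [abs_le]; constructor <;> linarith)]
    push_cast
    simp only [abs_eq_max_neg, max_def]
    split_ifs <;> linarith

lemma midDefect_tent {x y : ℝ} (hxy : x ≤ y) (h1 : y - x ≤ 1) :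
    midDefect tent x y =
      max 0 (y - x - 1 + tent ((x + y) / 2)) - max 0 (y - x - tent ((x + y) / 2)) := by
  have hu := abs_le.1 (abs_sub_round ((x + y) / 2))
  rcases le_or_gt (round ((x + y) / 2) : ℝ) ((x + y) / 2) with h | h
  · exact midDefect_tent_of_mem_Icc (k := round ((x + y) / 2)) hxy h1
      ⟨by linarith, by linarith⟩
  · have := midDefect_tent_of_mem_Icc (x := -y) (y := -x) (k := -round ((x + y) / 2))
      (by linarith) (by linarith) ⟨by push_cast; linarith, by push_cast; linarith⟩
    rw [midDefect_comm, sub_neg_eq_add, neg_add_eq_sub,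
      show (-y + -x) / 2 = -((x + y) / 2) by ring, tent_neg] at this
    simpa only [midDefect, show (-x + -y) / 2 = -((x + y) / 2) by ring, tent_neg] using this

section Takagi

variable {α : ℝ}

lemma one_div_two_rpow_mul_natCast (α : ℝ) (j : ℕ) :
    1 / (2 : ℝ) ^ (α * j) = ((2 : ℝ) ^ (-α)) ^ j := by
  rw [← Real.rpow_natCast, ← Real.rpow_mul zero_le_two, one_div, ← Real.rpow_neg zero_le_two,
    neg_mul]

lemma takagi_eq_tsum (α x : ℝ) :
    takagi α x = ∑' j : ℕ, ((2 : ℝ) ^ (-α)) ^ j * tent (2 ^ j * x) := by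
  simp only [takagi, one_div_two_rpow_mul_natCast]

lemma summable_takagi (hα : 0 < α) (x : ℝ) :
    Summable fun j : ℕ => ((2 : ℝ) ^ (-α)) ^ j * tent (2 ^ j * x) :=
  (summable_geometric_of_lt_one (by positivity) (two_rpow_neg_lt_one hα)).of_nonneg_of_le
    (fun _ => mul_nonneg (by positivity) (tent_nonneg _))
    (fun _ => mul_le_of_le_one_right (by positivity) (tent_le_one _))

lemma takagi_nonneg (α x : ℝ) : 0 ≤ takagi α x := by
  rw [takagi_eq_tsum]
  exact tsum_nonneg fun _ => mul_nonneg (by positivity) (tent_nonneg _)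

lemma takagi_le (hα : 0 < α) (x : ℝ) : takagi α x ≤ (1 - (2 : ℝ) ^ (-α))⁻¹ := by
  have hgeom := summable_geometric_of_lt_one (by positivity) (two_rpow_neg_lt_one hα)
  rw [takagi_eq_tsum, ← tsum_geometric_of_lt_one (by positivity) (two_rpow_neg_lt_one hα)]
  exact (summable_takagi hα x).tsum_le_tsum
    (fun _ => mul_le_of_le_one_right (by positivity) (tent_le_one _)) hgeom

lemma takagi_eq_tent_add (hα : 0 < α) (x : ℝ) :
    takagi α x = tent x + (2 : ℝ) ^ (-α) * takagi α (2 * x) := by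
  rw [takagi_eq_tsum, takagi_eq_tsum, (summable_takagi hα x).tsum_eq_zero_add, ← tsum_mul_left]
  simp only [pow_zero, one_mul, pow_succ, mul_assoc]
  congr 2
  funext j
  ring

lemma takagi_add_intCast (α x : ℝ) (n : ℤ) : takagi α (x + n) = takagi α x := by
  simp only [takagi_eq_tsum]
  congr 1
  funext j
  rw [mul_add, show (2 : ℝ) ^ j * n = ((2 ^ j * n : ℤ) : ℝ) by push_cast; ring,
    tent_add_intCast]

lemma takagi_sub_half (hα : 0 < α) (x : ℝ) :
    takagi α (x - 1 / 2) = takagi α x + 1 - 2 * tent x := by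
  have h2 : takagi α (2 * (x - 1 / 2)) = takagi α (2 * x) := by
    rw [show 2 * (x - 1 / 2) = 2 * x + ((-1 : ℤ) : ℝ) by push_cast; ring, takagi_add_intCast]
  rw [takagi_eq_tent_add hα (x - 1 / 2), h2, tent_sub_half, takagi_eq_tent_add hα x]
  ring

lemma two_rpow_mul_midDefect_takagi (hα : 0 < α) (x y : ℝ) :
    2 ^ α * midDefect (takagi α) x y =
      2 ^ α * midDefect tent x y + midDefect (takagi α) (2 * x) (2 * y) := by
  simp only [midDefect]
  rw [takagi_eq_tent_add hα ((x + y) / 2), takagi_eq_tent_add hα x, takagi_eq_tent_add hα y,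
    show 2 * ((x + y) / 2) = (2 * x + 2 * y) / 2 by ring]
  linear_combination (takagi α ((2 * x + 2 * y) / 2) - (takagi α (2 * x) + takagi α (2 * y)) / 2)
    * two_rpow_mul_two_rpow_neg α

end Takagi

lemma concaveOn_one_add_rpow_sub_rpow {α : ℝ} (hα1 : 1 ≤ α) (hα2 : α ≤ 2) :
    ConcaveOn ℝ (Set.Ici 0) fun t : ℝ => (1 + t) ^ α - t ^ α := by
  have hint : interior (Set.Ici (0 : ℝ)) = Set.Ioi 0 := interior_Ici
  refine concaveOn_of_hasDerivWithinAt2_nonpos (convex_Ici 0)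
    (f' := fun t => α * (1 + t) ^ (α - 1) - α * t ^ (α - 1))
    (f'' := fun t => α * (α - 1) * (1 + t) ^ (α - 2) - α * (α - 1) * t ^ (α - 2)) ?_ ?_ ?_ ?_
  · exact (((continuous_const.add continuous_id).rpow_const fun _ => Or.inr (by linarith)).sub
      (continuous_id.rpow_const fun _ => Or.inr (by linarith))).continuousOn
  all_goals rw [hint]; intro t (ht : 0 < t)
  · have h1 := ((hasDerivAt_id t).const_add 1).rpow_const (p := α) (Or.inl (by positivity))
    have h2 := Real.hasDerivAt_rpow_const (p := α) (Or.inl ht.ne')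
    refine (h1.sub h2).hasDerivWithinAt.congr_deriv ?_
    simp
  · have h1 := (((hasDerivAt_id t).const_add 1).rpow_const (p := α - 1)
      (Or.inl (by positivity))).const_mul α
    have h2 := (Real.hasDerivAt_rpow_const (p := α - 1) (Or.inl ht.ne')).const_mul α
    refine (h1.sub h2).hasDerivWithinAt.congr_deriv ?_
    simp only [id, one_mul, sub_sub, one_add_one_eq_two]
    ring
  · have hle : (1 + t) ^ (α - 2) ≤ t ^ (α - 2) :=
      Real.rpow_le_rpow_of_nonpos ht (by linarith) (by linarith)
    have hα : 0 ≤ α * (α - 1) := mul_nonneg (by linarith) (by linarith)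
    nlinarith [mul_le_mul_of_nonneg_left hle hα]

lemma one_add_rpow_add_mul_le {α s : ℝ} (hα1 : 1 ≤ α) (hα2 : α ≤ 2) (hs0 : 0 ≤ s)
    (hs1 : s ≤ 1) : 1 + s ^ α + ((2 : ℝ) ^ α - 2) * s ≤ (1 + s) ^ α := by
  have h := (concaveOn_one_add_rpow_sub_rpow hα1 hα2).2 Set.self_mem_Ici
    (Set.mem_Ici.2 zero_le_one) (sub_nonneg.2 hs1) hs0 (sub_add_cancel 1 s)
  simp only [smul_eq_mul, mul_zero, mul_one, zero_add, add_zero, sub_zero, one_add_one_eq_two,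
    Real.zero_rpow (by linarith : α ≠ 0), Real.one_rpow] at h
  linarith

-- The two cases of `2^α G(x, y) ≤ G(x', y')` once everything is expressed through
-- `A = 2^α`, `h = y - x` and `t = φ((x + y)/2)`.
lemma gap_ineq_of_le_half {A h t : ℝ} (hA : A ≤ 4) (hh : h ≤ 1 / 2) :
    max 0 (h - 1 + t) - max 0 (h - t) + A * max 0 ((h - t) / 2) ≤
      max 0 (h - min t (1 - t)) := by
  simp only [max_def, min_def]
  split_ifs <;> nlinarith

lemma gap_ineq_of_half_le {A h t : ℝ} (hA2 : 2 ≤ A) (hA4 : A ≤ 4) (hh : 1 / 2 ≤ h) :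
    A * (max 0 (h - 1 + t) - max 0 (h - t)) + 4 * min t (1 - t) - 2 - (A - 2) * (2 * h - 1)
      + A * (A * max 0 ((h - t) / 2)) ≤ A * max 0 (h - 1 + min t (1 - t)) := by
  have hA2' : 0 ≤ A - 2 := by linarith
  have hA4' : 0 ≤ 4 - A := by linarith
  rcases le_total t (1 / 2) with ht | ht
  · rw [min_eq_left (by linarith), max_eq_right (by linarith : 0 ≤ h - t),
      max_eq_right (by linarith : 0 ≤ (h - t) / 2)]
    nlinarith [mul_nonneg (mul_nonneg hA2' hA4') (by linarith : 0 ≤ h - t),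
      mul_nonneg hA4' (by linarith : 0 ≤ 1 - 2 * t)]
  · rw [min_eq_right (by linarith), max_eq_right (by linarith : 0 ≤ h - 1 + t),
      show h - 1 + (1 - t) = h - t by ring]
    rcases le_total 0 (h - t) with hp | hp
    · rw [max_eq_right hp, max_eq_right (by linarith)]
      nlinarith [mul_nonneg (mul_nonneg hA4' hA2') hp]
    · rw [max_eq_left hp, max_eq_left (by linarith)]
      nlinarith [mul_nonneg hA4' (neg_nonneg.2 hp)]

noncomputable def takagiGap (α x y : ℝ) : ℝ :=
  midDefect (takagi α) x y - |y - x| ^ α + 2 ^ α * max 0 ((|y - x| - tent ((x + y) / 2)) / 2)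

section Gap

variable {α : ℝ}

lemma takagiGap_comm (α x y : ℝ) : takagiGap α x y = takagiGap α y x := by
  rw [takagiGap, takagiGap, midDefect_comm, abs_sub_comm, add_comm x]

lemma takagiGap_le (hα : 0 < α) {x y : ℝ} (hxy : |y - x| ≤ 1) :
    takagiGap α x y ≤ (1 - (2 : ℝ) ^ (-α))⁻¹ + 2 ^ α := by
  have hW : max 0 ((|y - x| - tent ((x + y) / 2)) / 2) ≤ 1 :=
    max_le zero_le_one (by linarith [tent_nonneg ((x + y) / 2)])
  have := mul_le_of_le_one_right (by positivity : (0 : ℝ) ≤ 2 ^ α) hW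
  have := takagi_le hα ((x + y) / 2)
  have := takagi_nonneg α x
  have := takagi_nonneg α y
  have : 0 ≤ |y - x| ^ α := by positivity
  rw [takagiGap, midDefect]
  linarith

lemma two_rpow_mul_takagiGap_le_of_le_half (hα : 0 < α) (hα2 : α ≤ 2) {x y : ℝ}
    (hxy : x ≤ y) (hh : y - x ≤ 1 / 2) :
    2 ^ α * takagiGap α x y ≤ takagiGap α (2 * x) (2 * y) := by
  have hD := two_rpow_mul_midDefect_takagi hα x y
  rw [midDefect_tent hxy (by linarith)] at hD
  have key := gap_ineq_of_le_half (t := tent ((x + y) / 2)) (two_rpow_le_four hα2) hh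
  have hpow : |2 * y - 2 * x| ^ α = 2 ^ α * |y - x| ^ α := by
    rw [← mul_sub, abs_mul, abs_two, Real.mul_rpow zero_le_two (abs_nonneg _)]
  unfold takagiGap
  rw [hpow, show (2 * x + 2 * y) / 2 = 2 * ((x + y) / 2) by ring, tent_two_mul,
    abs_of_nonneg (sub_nonneg.2 hxy), abs_of_nonneg (by linarith : 0 ≤ 2 * y - 2 * x),
    show (2 * y - 2 * x - 2 * min (tent ((x + y) / 2)) (1 - tent ((x + y) / 2))) / 2
      = y - x - min (tent ((x + y) / 2)) (1 - tent ((x + y) / 2)) by ring]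
  linarith [mul_le_mul_of_nonneg_left key (by positivity : (0 : ℝ) ≤ 2 ^ α)]

lemma midDefect_takagi_sub_one (hα : 0 < α) (x y : ℝ) :
    midDefect (takagi α) x (y - 1) =
      midDefect (takagi α) x y + 1 - 2 * tent ((x + y) / 2) := by
  simp only [midDefect]
  rw [show (x + (y - 1)) / 2 = (x + y) / 2 - 1 / 2 by ring, takagi_sub_half hα,
    show y - 1 = y + ((-1 : ℤ) : ℝ) by push_cast; ring, takagi_add_intCast]
  ring

lemma two_rpow_mul_takagiGap_le_of_half_le (hα1 : 1 ≤ α) (hα2 : α ≤ 2) {x y : ℝ}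
    (hh : 1 / 2 ≤ y - x) (h1 : y - x ≤ 1) :
    2 ^ α * takagiGap α x y ≤ takagiGap α (2 * x) (2 * y - 1) := by
  have hα : 0 < α := by linarith
  have hD := two_rpow_mul_midDefect_takagi hα x y
  rw [midDefect_tent (by linarith) h1] at hD
  have key := gap_ineq_of_half_le (t := tent ((x + y) / 2))
    (two_le_two_rpow hα1) (two_rpow_le_four hα2) hh
  have hQ := one_add_rpow_add_mul_le hα1 hα2 (s := 2 * (y - x) - 1) (by linarith) (by linarith)
  rw [show 1 + (2 * (y - x) - 1) = 2 * (y - x) by ring,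
    Real.mul_rpow zero_le_two (by linarith)] at hQ
  unfold takagiGap
  rw [midDefect_takagi_sub_one hα, show (2 * x + 2 * y) / 2 = 2 * ((x + y) / 2) by ring,
    show (2 * x + (2 * y - 1)) / 2 = 2 * ((x + y) / 2) - 1 / 2 by ring, tent_sub_half, tent_two_mul,
    show 2 * y - 1 - 2 * x = 2 * (y - x) - 1 by ring,
    abs_of_nonneg (by linarith : 0 ≤ 2 * (y - x) - 1), abs_of_nonneg (by linarith : 0 ≤ y - x),
    show (2 * (y - x) - 1 - (1 - 2 * min (tent ((x + y) / 2)) (1 - tent ((x + y) / 2)))) / 2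
      = y - x - 1 + min (tent ((x + y) / 2)) (1 - tent ((x + y) / 2)) by ring]
  linarith [mul_le_mul_of_nonneg_left key (by positivity : (0 : ℝ) ≤ 2 ^ α)]

lemma exists_two_rpow_mul_takagiGap_le (hα1 : 1 ≤ α) (hα2 : α ≤ 2) {x y : ℝ}
    (hxy : |y - x| ≤ 1) :
    ∃ x' y' : ℝ, |y' - x'| ≤ 1 ∧ 2 ^ α * takagiGap α x y ≤ takagiGap α x' y' := by
  wlog hle : x ≤ y generalizing x y
  · rw [takagiGap_comm]
    exact this (by rwa [abs_sub_comm]) (by linarith)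
  rw [abs_of_nonneg (sub_nonneg.2 hle)] at hxy
  rcases le_total (y - x) (1 / 2) with hh | hh
  · refine ⟨2 * x, 2 * y, ?_, two_rpow_mul_takagiGap_le_of_le_half (by linarith) hα2 hle hh⟩
    rw [abs_le]
    constructor <;> linarith
  · refine ⟨2 * x, 2 * y - 1, ?_, two_rpow_mul_takagiGap_le_of_half_le hα1 hα2 hh hxy⟩
    rw [abs_le]
    constructor <;> linarith

lemma takagiGap_nonpos (hα1 : 1 ≤ α) (hα2 : α ≤ 2) {x y : ℝ} (hxy : |y - x| ≤ 1) :
    takagiGap α x y ≤ 0 := by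
  refine nonpos_of_forall_exists_mul_le (ι := {p : ℝ × ℝ // |p.2 - p.1| ≤ 1})
    (g := fun p => takagiGap α p.1.1 p.1.2)
    (Real.one_lt_rpow one_lt_two (by linarith : (0 : ℝ) < α))
    ⟨(1 - (2 : ℝ) ^ (-α))⁻¹ + 2 ^ α, ?_⟩ (fun p => ?_) ⟨(x, y), hxy⟩
  · rintro _ ⟨p, rfl⟩
    exact takagiGap_le (by linarith) p.2
  · obtain ⟨x', y', h', hle⟩ := exists_two_rpow_mul_takagiGap_le hα1 hα2 p.2
    exact ⟨⟨(x', y'), h'⟩, hle⟩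

end Gap

theorem takagi_approx_convex (α : ℝ) (hα1 : 1 ≤ α) (hα2 : α ≤ 2)
    (x y : ℝ) (hx : x ∈ Set.Icc (0:ℝ) 1) (hy : y ∈ Set.Icc (0:ℝ) 1) :
    takagi α ((x + y) / 2) ≤ (takagi α x + takagi α y) / 2 + |x - y| ^ α := by
  have hxy : |y - x| ≤ 1 :=
    abs_sub_le_iff.2 ⟨by linarith [hx.1, hy.2], by linarith [hx.2, hy.1]⟩
  have hgap := takagiGap_nonpos hα1 hα2 hxy
  have hW : 0 ≤ (2 : ℝ) ^ α * max 0 ((|y - x| - tent ((x + y) / 2)) / 2) :=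
    mul_nonneg (by positivity) (le_max_left _ _)
  rw [takagiGap, midDefect] at hgap
  rw [abs_sub_comm x y]
  linarith
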